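/- For every n ≥ 0, U((r^2+r)·r^{2n}) + (r^2+r)·r^{2n} = (r^2+r)·C_n(r^2); that is, the operator U+I takes (r^2+r)·r^{2n} to (r^2+r) times the polynomial C_n evaluated at r^2. -/

import Mathlib

open Polynomial

noncomputable section

/-- `F = r(r+1)^5` in `(ZMod 2)[r]`. -/
def Fp : Polynomial (ZMod 2) := X * (X + 1) ^ 5

/-- `G = r^5(r+1)` in `(ZMod 2)[r]`. -/
def Gp : Polynomial (ZMod 2) := X ^ 5 * (X + 1)

/-- The images `v_0, …, v_5` of `1, r, …, r^5` under `U`. -/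
def v : ℕ → Polynomial (ZMod 2)
  | 0 => 1
  | 1 => X
  | 2 => X ^ 2
  | 3 => X ^ 3 + X ^ 2 + X
  | 4 => X ^ 4
  | 5 => X ^ 5 + X ^ 4 + X
  | _ => 0

/-- `U` is the unique `ZMod 2`-linear map with `U (G^k r^i) = F^k v_i` for `0 ≤ i ≤ 5`. -/
def IsU (U : Polynomial (ZMod 2) →ₗ[ZMod 2] Polynomial (ZMod 2)) : Prop :=
  ∀ k i : ℕ, i ≤ 5 → U (Gp ^ k * X ^ i) = Fp ^ k * v i

/-- The recurrence defining the polynomials `C_n` in `(ZMod 2)[t]`. -/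
def IsC (C : ℕ → Polynomial (ZMod 2)) : Prop :=
  C 0 = 0 ∧ C 1 = 1 ∧ C 2 = 1 ∧ C 3 = X ∧ C 4 = X ^ 2 ∧ C 5 = X ^ 4 + X ^ 2 + X ∧
  ∀ n : ℕ, C (n + 6) = C (n + 5) + (X ^ 6 + X ^ 5 + X ^ 2 + X) * C n + X ^ n * (X ^ 2 + X)

/-!
Since `G = X^6 + X^5` in characteristic two, `U (X^6 p) = U (X^5 p) + F U p`, so
`s m = U ((X^2+X) X^m)` satisfies `s (m+6) = s (m+5) + F s m`. Squaring this recurrence in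
characteristic two gives `s (m+12) = s (m+10) + F^2 s m`, hence `w n = (U + 1)((X^2+X) X^(2n))`
satisfies `w (n+6) = w (n+5) + F^2 w n + (X^2+X)^3 X^(2n)`. Over `ZMod 2` we have
`C_n(X^2) = C_n^2`, and squaring the recurrence of `C` shows that `(X^2+X) C_n^2` satisfies the same
recurrence. The two sequences agree for `n < 6` by direct computation.
-/

theorem eq_of_recurrence_of_eq_init {α : Type*} {k : ℕ} (step : ℕ → (Fin k → α) → α)
    {f g : ℕ → α} (hf : ∀ n, f (n + k) = step n fun i => f (n + i))
    (hg : ∀ n, g (n + k) = step n fun i => g (n + i)) (hinit : ∀ n < k, f n = g n) :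
    f = g := by
  funext n
  induction n using Nat.strong_induction_on with
  | _ n ih =>
    rcases lt_or_ge n k with hn | hn
    · exact hinit n hn
    · obtain ⟨m, rfl⟩ := Nat.exists_eq_add_of_le' hn
      rw [hf, hg]
      congr 1
      funext i
      exact ih _ (by omega)

theorem CharTwo.recurrence_sq {R : Type*} [CommRing R] [CharP R 2] {u : ℕ → R} {a : R} {k : ℕ}
    (h : ∀ m, u (m + k + 1) = u (m + k) + a * u m) (m : ℕ) :
    u (m + 2 * k + 2) = u (m + 2 * k) + a ^ 2 * u m := by
  have h₁ := h (m + k + 1)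
  rw [show m + k + 1 + k + 1 = m + 2 * k + 2 by ring, show m + k + 1 + k = m + k + k + 1 by ring,
    h (m + k), show m + k + k = m + 2 * k by ring, h m] at h₁
  linear_combination h₁ + a * u (m + k) * CharTwo.two_eq_zero (R := R)

theorem comp_X_pow_char_eq_pow {p : ℕ} [Fact p.Prime] (f : (ZMod p)[X]) :
    f.comp (X ^ p) = f ^ p := by
  rw [← expand_eq_comp_X_pow, ZMod.expand_card]

theorem X_pow_six_eq_Gp_add : (X : (ZMod 2)[X]) ^ 6 = Gp + X ^ 5 := by
  rw [Gp]; ring_nf; reduce_mod_char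

theorem Fp_eq : Fp = X ^ 6 + X ^ 5 + X ^ 2 + X := by
  rw [Fp]; ring_nf; reduce_mod_char

theorem Fp_sq : Fp ^ 2 = X ^ 12 + X ^ 10 + X ^ 4 + X ^ 2 := by
  rw [Fp]; ring_nf; reduce_mod_char

namespace IsU

variable {U : (ZMod 2)[X] →ₗ[ZMod 2] (ZMod 2)[X]} (hU : IsU U)
include hU

theorem map_X_pow {i : ℕ} (hi : i ≤ 5) : U (X ^ i) = v i := by
  simpa using hU 0 i hi

theorem map_Gp_pow_mul_X_pow (m k : ℕ) : U (Gp ^ k * X ^ m) = Fp ^ k * U (X ^ m) := by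
  induction m using Nat.strong_induction_on generalizing k with
  | _ m ih =>
    rcases le_or_gt m 5 with hm | hm
    · rw [hU k m hm, hU.map_X_pow hm]
    · obtain ⟨m, rfl⟩ : ∃ j, m = j + 6 := ⟨m - 6, by omega⟩
      have hsplit : (X : (ZMod 2)[X]) ^ (m + 6) = Gp * X ^ m + X ^ (m + 5) := by
        rw [pow_add, X_pow_six_eq_Gp_add]; ring
      have hX : U (X ^ (m + 6)) = Fp * U (X ^ m) + U (X ^ (m + 5)) := by
        rw [hsplit, map_add, ← pow_one Gp, ih m (by omega) 1, pow_one]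
      rw [hX, hsplit, mul_add, ← mul_assoc, ← pow_succ, map_add, ih m (by omega),
        ih (m + 5) (by omega)]
      ring

theorem map_Gp_mul (p : (ZMod 2)[X]) : U (Gp * p) = Fp * U p := by
  induction p using Polynomial.induction_on' with
  | add p q hp hq => rw [mul_add, map_add, map_add, hp, hq, mul_add]
  | monomial m a =>
    rw [← smul_X_eq_monomial, mul_smul_comm, map_smul, map_smul, mul_smul_comm,
      ← pow_one Gp, hU.map_Gp_pow_mul_X_pow, pow_one]

theorem map_X_pow_six_mul (p : (ZMod 2)[X]) : U (X ^ 6 * p) = U (X ^ 5 * p) + Fp * U p := by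
  rw [X_pow_six_eq_Gp_add, add_mul, map_add, hU.map_Gp_mul, add_comm]

theorem map_add_id_recurrence (n : ℕ) :
    U ((X ^ 2 + X) * X ^ (2 * (n + 6))) + (X ^ 2 + X) * X ^ (2 * (n + 6))
      = (U ((X ^ 2 + X) * X ^ (2 * (n + 5))) + (X ^ 2 + X) * X ^ (2 * (n + 5)))
        + Fp ^ 2 * (U ((X ^ 2 + X) * X ^ (2 * n)) + (X ^ 2 + X) * X ^ (2 * n))
        + (X ^ 2 + X) ^ 3 * X ^ (2 * n) := by
  have hrec (m : ℕ) : U ((X ^ 2 + X) * X ^ (m + 5 + 1))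
      = U ((X ^ 2 + X) * X ^ (m + 5)) + Fp * U ((X ^ 2 + X) * X ^ m) := by
    rw [show (X ^ 2 + X) * X ^ (m + 5 + 1) = X ^ 6 * ((X ^ 2 + X) * X ^ m) by ring,
      show (X ^ 2 + X) * X ^ (m + 5) = X ^ 5 * ((X ^ 2 + X) * X ^ m) by ring]
    exact hU.map_X_pow_six_mul _
  have hrec₂ := CharTwo.recurrence_sq (u := fun m => U ((X ^ 2 + X) * X ^ m)) hrec (2 * n)
  rw [show 2 * (n + 6) = 2 * n + 2 * 5 + 2 by ring, show 2 * (n + 5) = 2 * n + 2 * 5 by ring,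
    hrec₂, Fp_sq]
  ring_nf; reduce_mod_char

end IsU

theorem IsC.sq_recurrence {C : ℕ → (ZMod 2)[X]} (hC : IsC C) (n : ℕ) :
    C (n + 6) ^ 2 = C (n + 5) ^ 2 + Fp ^ 2 * C n ^ 2 + (X ^ 2 + X) ^ 2 * X ^ (2 * n) := by
  rw [hC.2.2.2.2.2.2 n, CharTwo.add_sq, CharTwo.add_sq, mul_pow, mul_pow, ← Fp_eq, ← pow_mul]
  ring

theorem UplusI_image_of_lt_six {U : (ZMod 2)[X] →ₗ[ZMod 2] (ZMod 2)[X]} (hU : IsU U)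
    {C : ℕ → (ZMod 2)[X]} (hC : IsC C) {n : ℕ} (hn : n < 6) :
    U ((X ^ 2 + X) * X ^ (2 * n)) + (X ^ 2 + X) * X ^ (2 * n) = (X ^ 2 + X) * C n ^ 2 := by
  obtain ⟨h0, h1, h2, h3, h4, h5, -⟩ := hC
  interval_cases n
  · nth_rw 1 [show (X ^ 2 + X) * X ^ (2 * 0) = X ^ 2 + X ^ 1 by ring]
    rw [map_add, hU.map_X_pow (by norm_num), hU.map_X_pow (by norm_num), h0]
    simp only [v]
    ring_nf; reduce_mod_char
  · nth_rw 1 [show (X ^ 2 + X) * X ^ (2 * 1) = X ^ 4 + X ^ 3 by ring]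
    rw [map_add, hU.map_X_pow (by norm_num), hU.map_X_pow (by norm_num), h1]
    simp only [v]
    ring_nf; reduce_mod_char
  · nth_rw 1 [show (X ^ 2 + X) * X ^ (2 * 2) = Gp ^ 1 * X ^ 0 by rw [Gp]; ring]
    rw [hU 1 0 (by norm_num), h2]
    simp only [v, Fp_eq]
    ring_nf; reduce_mod_char
  · nth_rw 1 [show (X ^ 2 + X) * X ^ (2 * 3) = Gp ^ 1 * X ^ 2 by rw [Gp]; ring]
    rw [hU 1 2 (by norm_num), h3]
    simp only [v, Fp_eq]
    ring_nf; reduce_mod_char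
  · nth_rw 1 [show (X ^ 2 + X) * X ^ (2 * 4) = Gp ^ 1 * X ^ 4 by rw [Gp]; ring]
    rw [hU 1 4 (by norm_num), h4]
    simp only [v, Fp_eq]
    ring_nf; reduce_mod_char
  · nth_rw 1 [show (X ^ 2 + X) * X ^ (2 * 5) = Gp ^ 2 * X ^ 0 + Gp ^ 1 * X ^ 5 by
      rw [Gp]; ring_nf; reduce_mod_char]
    rw [map_add, hU 2 0 (by norm_num), hU 1 5 (by norm_num), h5]
    simp only [v, Fp_eq]
    ring_nf; reduce_mod_char

theorem UplusI_image (U : Polynomial (ZMod 2) →ₗ[ZMod 2] Polynomial (ZMod 2)) (hU : IsU U)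
    (C : ℕ → Polynomial (ZMod 2)) (hC : IsC C) (n : ℕ) :
    U ((X ^ 2 + X) * X ^ (2 * n)) + (X ^ 2 + X) * X ^ (2 * n)
      = (X ^ 2 + X) * (C n).comp (X ^ 2) := by
  have hrecC (n : ℕ) : (X ^ 2 + X) * C (n + 6) ^ 2
      = (X ^ 2 + X) * C (n + 5) ^ 2 + Fp ^ 2 * ((X ^ 2 + X) * C n ^ 2)
        + (X ^ 2 + X) ^ 3 * X ^ (2 * n) := by
    rw [hC.sq_recurrence]; ring
  rw [comp_X_pow_char_eq_pow]
  refine congrFun (eq_of_recurrence_of_eq_init (k := 6)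
    (fun n x => x 5 + Fp ^ 2 * x 0 + (X ^ 2 + X) ^ 3 * X ^ (2 * n))
    (f := fun n => U ((X ^ 2 + X) * X ^ (2 * n)) + (X ^ 2 + X) * X ^ (2 * n))
    (g := fun n => (X ^ 2 + X) * C n ^ 2) hU.map_add_id_recurrence hrecC
    fun _ hn => UplusI_image_of_lt_six hU hC hn) n

end
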